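/- arXiv:1603.08878 — 2 statements merged into one kernel-verified Lean document; each statement's English description precedes it below -/
import Mathlib

section
/- Let q be a power of 2, n | q−1, and α ∈ F_q a primitive n-th root of unity. Let D be a nonzero cyclic code of length n over F_q with complete defining set Z(D). Let p and p+2 be two positive integers that both divide n, and assume there exists an integer l such that (i) {α^i : l·p(p+2) − (p−1) ≤ i ≤ l·p(p+2) + (p−1)} ⊆ Z(D), and (ii) the symmetric difference G_p △ G_{p+2} is disjoint from Z(D). Then the minimum distance of D equals exactly 2p. -/
/-!
The lower bound is the BCH bound for the `2p - 1` consecutive zeros. For the upper bound, let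
`c` be the sum of the indicator words of the multiples of `n / p` and of `n / (p + 2)`. Its
transform `c(β)` is `p·[β ∈ G_p] + (p + 2)·[β ∈ G_{p+2}]`, which in characteristic 2 vanishes
exactly off `G_p ∆ G_{p+2}`, hence on `Z(D)`; since `n` is odd, discrete Fourier inversion shows
that a cyclic code contains every word vanishing on its defining set, so `c ∈ D`. As `p` and `p + 2` are coprime, the two supports meet
only in `0`, where the entries cancel, so `c` has weight `(p - 1) + (p + 1) = 2p`.
-/

open scoped BigOperators

namespace LRC

/-- Hamming weight of a vector. -/
noncomputable def hwt {n : ℕ} {F : Type*} [Zero F] (c : Fin n → F) : ℕ :=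
  Nat.card {i : Fin n // c i ≠ 0}

/-- A linear code is cyclic if it is closed under the cyclic shift of coordinates. -/
def IsCyclicCode {n : ℕ} [NeZero n] {F : Type*} [Field F] (C : Submodule F (Fin n → F)) : Prop :=
  ∀ c ∈ C, (fun i : Fin n => c (i - 1)) ∈ C

/-- `A` is a recovery set for coordinate `i` of the code `C`. -/
def IsRecoverySet {n : ℕ} {F : Type*} [Field F] (C : Submodule F (Fin n → F)) (i : Fin n)
    (A : Finset (Fin n)) : Prop :=
  i ∉ A ∧ ∃ φ : ((j : A) → F) → F, ∀ c ∈ C, c i = φ (fun j => c j)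

/-- The code `C` has locality `r`. -/
def HasLocality {n : ℕ} {F : Type*} [Field F] (C : Submodule F (Fin n → F)) (r : ℕ) : Prop :=
  ∀ i : Fin n, ∃ A : Finset (Fin n), A.card ≤ r ∧ IsRecoverySet C i A

/-- Complete defining set of zeros of a cyclic code (locator field = symbol field). -/
def definingSet {n : ℕ} {F : Type*} [Field F] (C : Submodule F (Fin n → F)) : Set F :=
  {β | β ^ n = 1 ∧ ∀ c ∈ C, ∑ j : Fin n, c j * β ^ (j : ℕ) = 0}

/-- Complete defining set of zeros of a cyclic code in an extension (locator) field `K`. -/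
def definingSetExt (n : ℕ) {F K : Type*} [Field F] [Field K] [Algebra F K]
    (C : Submodule F (Fin n → F)) : Set K :=
  {β | β ^ n = 1 ∧ ∀ c ∈ C, ∑ j : Fin n, algebraMap F K (c j) * β ^ (j : ℕ) = 0}

/-- The cyclic code with a given set of zeros. -/
def codeOfZeros (n : ℕ) {F : Type*} [Field F] (Z : Set F) : Submodule F (Fin n → F) where
  carrier := {c | ∀ β ∈ Z, ∑ j : Fin n, c j * β ^ (j : ℕ) = 0}
  add_mem' := by
    intro a b ha hb β hβ
    have h1 := ha β hβ
    have h2 := hb β hβ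
    calc ∑ j : Fin n, (a + b) j * β ^ (j : ℕ)
        = (∑ j : Fin n, a j * β ^ (j : ℕ)) + ∑ j : Fin n, b j * β ^ (j : ℕ) := by
          rw [← Finset.sum_add_distrib]
          exact Finset.sum_congr rfl (by intro j _; simp [add_mul])
      _ = 0 := by rw [h1, h2, add_zero]
  zero_mem' := by intro β hβ; simp
  smul_mem' := by
    intro t a ha β hβ
    have h1 := ha β hβ
    calc ∑ j : Fin n, (t • a) j * β ^ (j : ℕ)
        = t * ∑ j : Fin n, a j * β ^ (j : ℕ) := by
          rw [Finset.mul_sum]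
          exact Finset.sum_congr rfl (by intro j _; simp [mul_assoc])
      _ = 0 := by rw [h1, mul_zero]

/-- Minimum distance: least Hamming weight of a nonzero codeword. -/
noncomputable def minDist {n : ℕ} {F : Type*} [Field F] (C : Submodule F (Fin n → F)) : ℕ :=
  sInf {w | ∃ c ∈ C, c ≠ 0 ∧ hwt c = w}

/-- The dual code under the standard bilinear form. -/
def dualCode {n : ℕ} {F : Type*} [Field F] (C : Submodule F (Fin n → F)) :
    Submodule F (Fin n → F) where
  carrier := {y | ∀ c ∈ C, ∑ i : Fin n, c i * y i = 0}
  add_mem' := by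
    intro a b ha hb c hc
    have h1 := ha c hc
    have h2 := hb c hc
    calc ∑ i : Fin n, c i * (a + b) i
        = (∑ i : Fin n, c i * a i) + ∑ i : Fin n, c i * b i := by
          rw [← Finset.sum_add_distrib]
          exact Finset.sum_congr rfl (by intro j _; simp [mul_add])
      _ = 0 := by rw [h1, h2, add_zero]
  zero_mem' := by intro c hc; simp
  smul_mem' := by
    intro t a ha c hc
    have h1 := ha c hc
    calc ∑ i : Fin n, c i * (t • a) i
        = t * ∑ i : Fin n, c i * a i := by
          rw [Finset.mul_sum]
          exact Finset.sum_congr rfl (by intro j _; simp [mul_assoc]; ring)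
      _ = 0 := by rw [h1, mul_zero]



open scoped symmDiff

/-- The coset `α^l G_m` of the subgroup `G_m = {α^{jm}}` of the n-th roots of unity. -/
def coset {F : Type*} [Field F] (α : F) (n : ℕ) (l : ℤ) (m : ℕ) : Set F :=
  {β | ∃ j : ℕ, j < n / m ∧ β = α ^ (l + (j : ℤ) * m)}

open Finset

theorem _root_.geom_sum_eq_ite_of_pow_eq_one {K : Type*} [Field K] [DecidableEq K] {m : ℕ}
    {β : K} (hβ : β ^ m = 1) : ∑ t ∈ range m, β ^ t = if β = 1 then (m : K) else 0 := by
  split_ifs with h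
  · simp [h]
  · have h0 : (∑ t ∈ range m, β ^ t) * (β - 1) = 0 := by rw [geom_sum_mul, hβ, sub_self]
    exact (mul_eq_zero.mp h0).resolve_right (sub_ne_zero.mpr h)

theorem _root_.Fin.sum_filter_dvd {M : Type*} [AddCommMonoid M] {n d : ℕ} (hd : d ∣ n)
    (f : ℕ → M) : ∑ i : Fin n with d ∣ i.val, f i = ∑ j ∈ range (n / d), f (j * d) := by
  rw [sum_filter, Fin.sum_univ_eq_sum_range (fun i => if d ∣ i then f i else 0),
    ← sum_filter (s := range n)]
  obtain ⟨k, rfl⟩ := hd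
  rcases Nat.eq_zero_or_pos d with rfl | hd0
  · simp
  have himage : {i ∈ range (d * k) | d ∣ i} = (range k).image (· * d) := by
    ext i
    simp only [mem_filter, mem_range, mem_image]
    constructor
    · rintro ⟨hi, j, rfl⟩
      exact ⟨j, by nlinarith, mul_comm j d⟩
    · rintro ⟨j, hj, rfl⟩
      exact ⟨by nlinarith, dvd_mul_left d j⟩
  rw [himage, sum_image fun a _ b _ h => Nat.eq_of_mul_eq_mul_right hd0 h,
    Nat.mul_div_cancel_left k hd0]

theorem _root_.Fin.card_filter_dvd {n d : ℕ} (hd : d ∣ n) :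
    #{i : Fin n | d ∣ (i : ℕ)} = n / d := by
  rw [card_eq_sum_ones, Fin.sum_filter_dvd hd fun _ => 1, sum_const, card_range, smul_eq_mul,
    mul_one]

theorem _root_.Nat.lcm_div_div_of_coprime {n a b : ℕ} (hab : a.Coprime b) (ha : 0 < a)
    (hb : 0 < b) (han : a ∣ n) (hbn : b ∣ n) : Nat.lcm (n / a) (n / b) = n := by
  obtain ⟨m, rfl⟩ := hab.mul_dvd_of_dvd_of_dvd han hbn
  rw [mul_assoc, Nat.mul_div_cancel_left _ ha, mul_left_comm, Nat.mul_div_cancel_left _ hb,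
    mul_comm b m, mul_comm a m, Nat.lcm_mul_left, hab.symm.lcm_eq_mul]
  ring

theorem _root_.Finset.eq_zero_of_forall_sum_mul_pow_eq_zero {ι R : Type*} [CommRing R]
    [IsDomain R] (s : Finset ι) {x v : ι → R} (hx : Set.InjOn x s)
    (h : ∀ k < #s, ∑ i ∈ s, v i * x i ^ k = 0) : ∀ i ∈ s, v i = 0 := by
  set e := s.equivFin.symm
  have hv : (fun j => v (e j)) = 0 :=
    Matrix.eq_zero_of_forall_pow_sum_mul_pow_eq_zero (f := fun j => x (e j))
      (fun a b hab => e.injective (Subtype.ext (hx (e a).2 (e b).2 hab))) fun k => by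
        rw [← h k k.isLt, ← s.sum_coe_sort]
        exact Fintype.sum_equiv e _ _ fun _ => rfl
  intro i hi
  simpa [e] using congrFun hv (s.equivFin ⟨i, hi⟩)

lemma hwt_eq_card {n : ℕ} {F : Type*} [Zero F] [DecidableEq F] (c : Fin n → F) :
    hwt c = #{i | c i ≠ 0} := by
  rw [hwt, Nat.card_eq_fintype_card, Fintype.card_subtype]

lemma minDist_eq_of_forall_le_hwt {n : ℕ} {F : Type*} [Field F] {C : Submodule F (Fin n → F)}
    {d : ℕ} (hle : ∀ c ∈ C, c ≠ 0 → d ≤ hwt c) {c : Fin n → F} (hc : c ∈ C)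
    (hwt_c : hwt c = d) (hd : 0 < d) : minDist C = d := by
  have hc0 : c ≠ 0 := by
    rintro rfl
    simp only [hwt, Pi.zero_apply, ne_eq, not_true_eq_false, Nat.card_of_isEmpty] at hwt_c
    omega
  exact le_antisymm (Nat.sInf_le ⟨c, hc, hc0, hwt_c⟩)
    (le_csInf ⟨d, c, hc, hc0, hwt_c⟩ fun _ ⟨c, hc, hc0, hw⟩ => hw ▸ hle c hc hc0)

section Evaluation

variable {F : Type*} [Field F] {n : ℕ}

def evalAt (n : ℕ) (β : F) : (Fin n → F) →ₗ[F] F where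
  toFun c := ∑ j : Fin n, c j * β ^ (j : ℕ)
  map_add' a b := by simp [add_mul, sum_add_distrib]
  map_smul' t a := by simp [mul_sum, mul_assoc]

lemma evalAt_apply (β : F) (c : Fin n → F) : evalAt n β c = ∑ j : Fin n, c j * β ^ (j : ℕ) :=
  rfl

theorem _root_.IsPrimitiveRoot.injective_pow_val {α : F} (hα : IsPrimitiveRoot α n) :
    Function.Injective fun t : Fin n => α ^ (t : ℕ) :=
  fun s t h => Fin.ext (hα.pow_inj s.2 t.2 h)

theorem _root_.IsPrimitiveRoot.pow_pow_eq_one {α : F} (hα : IsPrimitiveRoot α n) (t : ℕ) :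
    (α ^ t) ^ n = 1 := by
  rw [pow_right_comm, hα.pow_eq_one, one_pow]

lemma eq_zero_of_forall_evalAt_pow_eq_zero {α : F} (hα : IsPrimitiveRoot α n) {c : Fin n → F}
    (h : ∀ t : Fin n, evalAt n (α ^ (t : ℕ)) c = 0) : c = 0 :=
  Matrix.eq_zero_of_forall_pow_sum_mul_pow_eq_zero hα.injective_pow_val fun t => by
    simpa only [evalAt_apply, pow_right_comm α] using h t

theorem bch_bound {α : F} (hα : IsPrimitiveRoot α n) {c : Fin n → F} (hc : c ≠ 0) (m : ℕ)
    (a : ℤ) (hz : ∀ k < m, evalAt n (α ^ (a + k)) c = 0) : m < hwt c := by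
  classical
  have hα0 : α ≠ 0 := hα.ne_zero (by rintro rfl; exact hc (Subsingleton.elim _ _))
  rw [hwt_eq_card]
  by_contra! hle
  have hv := eq_zero_of_forall_sum_mul_pow_eq_zero {i | c i ≠ 0}
    (v := fun i => c i * (α ^ a) ^ (i : ℕ)) hα.injective_pow_val.injOn fun k hk => by
      refine Eq.trans ?_ (hz k (by omega))
      rw [evalAt_apply, ← sum_filter_of_ne (s := univ) (p := fun i => c i ≠ 0)
        fun i _ h => left_ne_zero_of_mul h]
      refine sum_congr rfl fun i _ => ?_
      rw [zpow_add₀ hα0, zpow_natCast]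
      ring
  obtain ⟨i, hi⟩ := Function.ne_iff.mp hc
  exact hi <| (mul_eq_zero.mp (hv i (by simpa using hi))).resolve_right
    (pow_ne_zero _ (zpow_ne_zero _ hα0))

lemma evalAt_inv_pow [DecidableEq F] [NeZero n] {γ β : F} (hγ : γ ^ n = 1) (hβ : β ^ n = 1) :
    evalAt n β (fun j : Fin n => γ⁻¹ ^ (j : ℕ)) = if γ = β then (n : F) else 0 := by
  have hγ0 : γ ≠ 0 := by
    rintro rfl
    simp [zero_pow (NeZero.ne n)] at hγ
  rw [evalAt_apply, Fin.sum_univ_eq_sum_range (fun j => γ⁻¹ ^ j * β ^ j)]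
  simp_rw [← mul_pow]
  rw [geom_sum_eq_ite_of_pow_eq_one (by rw [mul_pow, inv_pow, hγ, hβ, inv_one, one_mul])]
  simp only [inv_mul_eq_one₀ hγ0]

lemma eq_sum_smul_inv_pow [NeZero n] {α : F} (hα : IsPrimitiveRoot α n) (hn : (n : F) ≠ 0)
    (c : Fin n → F) :
    c = ∑ t : Fin n, ((n : F)⁻¹ * evalAt n (α ^ (t : ℕ)) c) •
      fun j : Fin n => (α ^ (t : ℕ))⁻¹ ^ (j : ℕ) := by
  classical
  refine sub_eq_zero.mp (eq_zero_of_forall_evalAt_pow_eq_zero hα fun s => ?_)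
  rw [map_sub, map_sum, sub_eq_zero]
  simp only [map_smul, smul_eq_mul, evalAt_inv_pow (hα.pow_pow_eq_one _) (hα.pow_pow_eq_one _),
    hα.injective_pow_val.eq_iff, mul_ite, mul_zero, sum_ite_eq', mem_univ, if_true]
  field_simp

end Evaluation

section Cyclic

variable {F : Type*} [Field F] {n : ℕ} [NeZero n] {D : Submodule F (Fin n → F)}

def cyclicShift (c : Fin n → F) : Fin n → F := fun i => c (i - 1)

lemma IsCyclicCode.iterate_cyclicShift_mem (hD : IsCyclicCode D) {c : Fin n → F} (hc : c ∈ D)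
    (k : ℕ) :
    cyclicShift^[k] c ∈ D := by
  induction k with
  | zero => exact hc
  | succ k ih =>
    rw [Function.iterate_succ_apply']
    exact hD _ ih

lemma evalAt_cyclicShift {β : F} (hβ : β ^ n = 1) (c : Fin n → F) :
    evalAt n β (cyclicShift c) = β * evalAt n β c := by
  rw [evalAt_apply, evalAt_apply, mul_sum]
  refine (Fintype.sum_equiv (Equiv.addRight 1) _ _ fun j => ?_).symm
  have hval : ((j + 1 : Fin n) : ℕ) = ((j : ℕ) + 1) % n := by
    rw [Fin.val_add, Fin.val_one', Nat.add_mod_mod]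
  rw [Equiv.coe_addRight, cyclicShift, add_sub_cancel_right, hval, ← pow_eq_pow_mod _ hβ, pow_succ]
  ring

lemma evalAt_iterate_cyclicShift {β : F} (hβ : β ^ n = 1) (c : Fin n → F) (k : ℕ) :
    evalAt n β (cyclicShift^[k] c) = β ^ k * evalAt n β c := by
  induction k with
  | zero => simp
  | succ k ih => rw [Function.iterate_succ_apply', evalAt_cyclicShift hβ, ih, pow_succ', mul_assoc]

lemma IsCyclicCode.inv_pow_mem (hD : IsCyclicCode D) {α : F} (hα : IsPrimitiveRoot α n)
    {γ : F} (hγ : γ ^ n = 1) (hγD : γ ∉ definingSet D) :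
    (fun j : Fin n => γ⁻¹ ^ (j : ℕ)) ∈ D := by
  classical
  obtain ⟨d, hd, hdγ⟩ : ∃ d ∈ D, evalAt n γ d ≠ 0 := by
    by_contra! h
    exact hγD ⟨hγ, h⟩
  set e : Fin n → F := fun j => γ⁻¹ ^ (j : ℕ)
  -- Averaging the shifts of `d` against the powers of `γ⁻¹` keeps only the frequency `γ`.
  have havg : ∑ k ∈ range n, γ⁻¹ ^ k • cyclicShift^[k] d = evalAt n γ d • e := by
    refine sub_eq_zero.mp (eq_zero_of_forall_evalAt_pow_eq_zero hα fun t => ?_)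
    have hβ := hα.pow_pow_eq_one t
    have he := evalAt_inv_pow hγ hβ
    rw [evalAt_apply, Fin.sum_univ_eq_sum_range (fun j => γ⁻¹ ^ j * (α ^ (t : ℕ)) ^ j)] at he
    simp only [map_sub, map_sum, map_smul, smul_eq_mul, evalAt_iterate_cyclicShift hβ, ← mul_assoc]
    rw [evalAt_inv_pow hγ hβ, sub_eq_zero, ← sum_mul]
    split_ifs at he ⊢ with hγt
    · rw [he, hγt, mul_comm]
    · rw [he, zero_mul, mul_zero]
  rw [← inv_smul_smul₀ hdγ e, ← havg]
  exact D.smul_mem _ (D.sum_mem fun k _ => D.smul_mem _ (hD.iterate_cyclicShift_mem hd k))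

lemma IsCyclicCode.mem_of_forall_evalAt_eq_zero (hD : IsCyclicCode D) {α : F}
    (hα : IsPrimitiveRoot α n) (hn : (n : F) ≠ 0) {c : Fin n → F}
    (hc : ∀ β ∈ definingSet D, evalAt n β c = 0) : c ∈ D := by
  classical
  rw [eq_sum_smul_inv_pow hα hn c]
  refine D.sum_mem fun t _ => ?_
  by_cases ht : α ^ (t : ℕ) ∈ definingSet D
  · rw [hc _ ht, mul_zero, zero_smul]
    exact D.zero_mem
  · exact D.smul_mem _ (hD.inv_pow_mem hα (hα.pow_pow_eq_one t) ht)

end Cyclic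

section Construction

variable {F : Type*} [Field F] {n : ℕ}

def multiplesIndicator (F : Type*) [Zero F] [One F] (n d : ℕ) : Fin n → F :=
  fun i => if d ∣ (i : ℕ) then 1 else 0

lemma evalAt_multiplesIndicator [DecidableEq F] {d : ℕ} (hd : d ∣ n) {β : F} (hβ : β ^ n = 1) :
    evalAt n β (multiplesIndicator F n d) = if β ^ d = 1 then ((n / d : ℕ) : F) else 0 := by
  simp only [evalAt_apply, multiplesIndicator, ite_mul, one_mul, zero_mul]
  rw [← sum_filter, Fin.sum_filter_dvd hd (β ^ ·)]
  simp_rw [mul_comm _ d, pow_mul]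
  exact geom_sum_eq_ite_of_pow_eq_one (by rw [← pow_mul, Nat.mul_div_cancel' hd, hβ])

variable [NeZero n]

lemma mem_coset_zero_iff {α : F} (hα : IsPrimitiveRoot α n) {m : ℕ} (hm : m ∣ n) {β : F} :
    β ∈ coset α n 0 m ↔ β ^ (n / m) = 1 := by
  have hm0 : m ≠ 0 := by
    rintro rfl
    exact NeZero.ne n (zero_dvd_iff.mp hm)
  have hαm := hα.pow_of_dvd hm0 hm
  have : NeZero (n / m) := ⟨Nat.div_ne_zero_iff_of_dvd hm |>.mpr ⟨NeZero.ne n, hm0⟩⟩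
  have hcoset : ∀ j : ℕ, α ^ ((0 : ℤ) + (j : ℤ) * (m : ℤ)) = (α ^ m) ^ j := fun j => by
    rw [zero_add, ← Nat.cast_mul, zpow_natCast, pow_mul']
  constructor
  · rintro ⟨j, -, rfl⟩
    rw [hcoset, pow_right_comm, hαm.pow_eq_one, one_pow]
  · intro h
    obtain ⟨j, hj, rfl⟩ := hαm.eq_pow_of_pow_eq_one h
    exact ⟨j, hj, (hcoset j).symm⟩

lemma evalAt_multiplesIndicator_add_eq_zero [CharP F 2] {α : F} (hα : IsPrimitiveRoot α n)
    {p : ℕ} (hpn : p ∣ n) (hp2n : (p + 2) ∣ n) {β : F} (hβ : β ^ n = 1)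
    (hβG : β ∉ coset α n 0 p ∆ coset α n 0 (p + 2)) :
    evalAt n β (multiplesIndicator F n (n / p) + multiplesIndicator F n (n / (p + 2))) = 0 := by
  classical
  rw [map_add, evalAt_multiplesIndicator (Nat.div_dvd_of_dvd hpn) hβ,
    evalAt_multiplesIndicator (Nat.div_dvd_of_dvd hp2n) hβ, Nat.div_div_self hpn (NeZero.ne n),
    Nat.div_div_self hp2n (NeZero.ne n)]
  rw [Set.mem_symmDiff, mem_coset_zero_iff hα hpn, mem_coset_zero_iff hα hp2n] at hβG
  by_cases h : β ^ (n / p) = 1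
  · rw [if_pos h, if_pos (by tauto)]
    push_cast
    rw [← add_assoc, CharTwo.add_self_eq_zero, zero_add, CharTwo.two_eq_zero]
  · rw [if_neg h, if_neg (by tauto), add_zero]

lemma _root_.Nat.coprime_self_add_two {p : ℕ} (hp : Odd p) : p.Coprime (p + 2) :=
  Nat.coprime_self_add_right.mpr (Nat.coprime_two_right.mpr hp)

lemma hwt_multiplesIndicator_add [CharP F 2] {p : ℕ} (hp : 0 < p) (hp_odd : Odd p)
    (hpn : p ∣ n) (hp2n : (p + 2) ∣ n) :
    hwt (multiplesIndicator F n (n / p) + multiplesIndicator F n (n / (p + 2))) = 2 * p := by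
  classical
  set c := multiplesIndicator F n (n / p) + multiplesIndicator F n (n / (p + 2))
  set A : Finset (Fin n) := {i | n / p ∣ (i : ℕ)}
  set B : Finset (Fin n) := {i | n / (p + 2) ∣ (i : ℕ)}
  have hsupp : ({i | c i ≠ 0} : Finset (Fin n)) = (A ∪ B) \ (A ∩ B) := by
    ext i
    rw [mem_filter]
    by_cases hA : n / p ∣ (i : ℕ) <;> by_cases hB : n / (p + 2) ∣ (i : ℕ) <;>
      simp [c, A, B, multiplesIndicator, hA, hB, CharTwo.add_self_eq_zero]
  have hAB : A ∩ B = {0} := by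
    ext i
    simp only [A, B, mem_inter, mem_filter, mem_univ, true_and, mem_singleton, ← Nat.lcm_dvd_iff,
      Nat.lcm_div_div_of_coprime (Nat.coprime_self_add_two hp_odd) hp (by omega) hpn hp2n]
    exact ⟨fun h => Fin.ext (Nat.eq_zero_of_dvd_of_lt h i.2), fun h => h ▸ dvd_zero n⟩
  have hA : #A = p := by
    rw [Fin.card_filter_dvd (Nat.div_dvd_of_dvd hpn), Nat.div_div_self hpn (NeZero.ne n)]
  have hB : #B = p + 2 := by
    rw [Fin.card_filter_dvd (Nat.div_dvd_of_dvd hp2n), Nat.div_div_self hp2n (NeZero.ne n)]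
  have hunion := card_union_add_card_inter A B
  rw [hAB, card_singleton, hA, hB] at hunion
  rw [hwt_eq_card, hsupp, card_sdiff_of_subset inter_subset_union, hAB, card_singleton]
  omega

end Construction

theorem stmt16_general {F : Type*} [Field F] [Fintype F] (q n : ℕ) [NeZero n]
    (hq : Fintype.card F = q) (hq2 : ∃ e : ℕ, 0 < e ∧ q = 2 ^ e) (hn : n ∣ q - 1)
    (α : F) (hα : IsPrimitiveRoot α n)
    (p : ℕ) (hp : 0 < p) (hpn : p ∣ n) (hp2n : (p + 2) ∣ n)
    (D : Submodule F (Fin n → F)) (hcyc : IsCyclicCode D)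
    (l : ℤ)
    (hconsec : {β : F | ∃ i : ℤ, l * p * (p + 2) - (p - 1) ≤ i ∧ i ≤ l * p * (p + 2) + (p - 1) ∧
        β = α ^ i} ⊆ definingSet D)
    (hdisj : Disjoint (coset α n 0 p ∆ coset α n 0 (p + 2)) (definingSet D)) :
    minDist D = 2 * p := by
  obtain ⟨e, he, rfl⟩ := hq2
  have : CharP F 2 := charP_of_card_eq_prime_pow hq
  have hn_odd : Odd n := Odd.of_dvd_nat (Nat.Even.sub_odd Nat.one_le_two_pow
    (Nat.even_pow.mpr ⟨even_two, he.ne'⟩) odd_one) hn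
  have hnF : (n : F) ≠ 0 := by
    rwa [Ne, CharP.cast_eq_zero_iff F 2, ← even_iff_two_dvd, Nat.not_even_iff_odd]
  refine minDist_eq_of_forall_le_hwt (fun c hc hc0 => ?_)
    (hcyc.mem_of_forall_evalAt_eq_zero hα hnF fun β hβ =>
      evalAt_multiplesIndicator_add_eq_zero hα hpn hp2n hβ.1 (hdisj.notMem_of_mem_right hβ))
    (hwt_multiplesIndicator_add hp (hn_odd.of_dvd_nat hpn) hpn hp2n) (by omega)
  have hbch := bch_bound hα hc0 (2 * p - 1) (l * p * (p + 2) - (p - 1)) fun k hk =>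
    (hconsec ⟨_, by omega, by omega, rfl⟩).2 c hc
  omega

/-- if the defining set of a nonzero cyclic code contains the `2p−1` consecutive
powers `α^i`, `l·p(p+2)−(p−1) ≤ i ≤ l·p(p+2)+(p−1)`, and is disjoint from `G_p ∆ G_{p+2}`,
then the minimum distance is exactly `2p`. -/
theorem stmt16 {F : Type*} [Field F] [Fintype F] (q n : ℕ) [NeZero n]
    (hq : Fintype.card F = q) (hq2 : ∃ e : ℕ, 0 < e ∧ q = 2 ^ e) (hn : n ∣ q - 1)
    (α : F) (hα : IsPrimitiveRoot α n)
    (p : ℕ) (hp : 0 < p) (hpn : p ∣ n) (hp2n : (p + 2) ∣ n)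
    (D : Submodule F (Fin n → F)) (hcyc : IsCyclicCode D) (hD : D ≠ ⊥)
    (l : ℤ)
    (hconsec : {β : F | ∃ i : ℤ, l * p * (p + 2) - (p - 1) ≤ i ∧ i ≤ l * p * (p + 2) + (p - 1) ∧
        β = α ^ i} ⊆ definingSet D)
    (hdisj : Disjoint (coset α n 0 p ∆ coset α n 0 (p + 2)) (definingSet D)) :
    minDist D = 2 * p :=
  stmt16_general q n hq hq2 hn α hα p hp hpn hp2n D hcyc l hconsec hdisj

end LRC
end

section
/- Let q be a power of 2, n | q−1, and α ∈ F_q a primitive n-th root of unity. Let D be a nonzero cyclic code of length n over F_q with complete defining set Z(D), let p_1, p_2, p_3 be positive divisors of n, and let l_1, l_2, l_3 be integers. If Z(D) contains none of the n-th roots of unity that belong to an odd number of the cosets α^{l_1}G_{p_1}, α^{l_2}G_{p_2}, α^{l_3}G_{p_3}, then the minimum distance of D satisfies d(D) ≤ p_1 + p_2 + p_3 − 2·gcd(p_1,p_2,l_1−l_2) − 2·gcd(p_1,p_3,l_1−l_3) − 2·gcd(p_2,p_3,l_2−l_3) + 4·gcd(p_1,p_2,p_3,l_1−l_2,l_2−l_3).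 -/
open scoped BigOperators

namespace LRC

open scoped Classical

/-!
Since `q` is even, `F` has characteristic two, and `n` is odd because `(n : F) ≠ 0`.
Averaging the cyclic shifts of a codeword `d` with weights `γ^{-i}` shows that the vector
`j ↦ γ^{-j}` lies in `D` whenever `d(γ) ≠ 0`, i.e. for every root of unity `γ ∉ Z(D)`.
Take `c = w₁ + w₂ + w₃` with `w_k j = ∑_{γ ∈ α^{l_k} G_{p_k}} γ^{-j}`. Grouping the terms by `γ`,
each `γ⁻ʲ` occurs with coefficient the number of cosets containing `γ`, which vanishes in
characteristic two unless that number is odd, so `c ∈ D`.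
A geometric sum gives `w_k j = [n ∣ j p_k] α^{-l_k j}`, so `c` is supported on the union of the
sets `{j : n ∣ j p_k}` of sizes `p_k`, and two terms cancel exactly where
`n ∣ j · gcd(p_a, p_b, l_a - l_b)`. A pointwise inclusion–exclusion inequality, summed over `j`,
bounds the weight of `c`, and `c ≠ 0` since `c 0 = 1 + 1 + 1 = 1`.
-/

open Finset

lemma charP_two_of_card_eq_two_pow {F : Type*} [Field F] [Fintype F] {e : ℕ} (he : 0 < e)
    (h : Fintype.card F = 2 ^ e) : CharP F 2 :=
  ringChar.of_eq (FiniteField.even_card_iff_char_two.mpr (by simp [h, Nat.pow_mod, he.ne']))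

lemma _root_.IsPrimitiveRoot.odd_of_charP_two {R : Type*} [CommRing R] [IsDomain R] [CharP R 2]
    {α : R} {n : ℕ} [NeZero n] (hα : IsPrimitiveRoot α n) : Odd n := by
  simpa [CharTwo.natCast_eq_ite] using hα.neZero'.out

lemma sum_natCast_smul_mem_of_odd {R M ι : Type*} [Ring R] [CharP R 2] [AddCommGroup M]
    [Module R M] {P : Submodule R M} (s : Finset ι) (N : ι → ℕ) (v : ι → M)
    (h : ∀ i ∈ s, Odd (N i) → v i ∈ P) : ∑ i ∈ s, (N i : R) • v i ∈ P := by
  refine P.sum_mem fun i hi => ?_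
  rcases Nat.even_or_odd (N i) with he | ho
  · simp [CharTwo.natCast_eq_ite, he]
  · exact P.smul_mem _ (h i hi ho)

lemma ite_add_ite_add_ite_ne_zero_le {F : Type*} [Field F] [CharP F 2] [DecidableEq F]
    {a b c : F} (ha : a ≠ 0) (hb : b ≠ 0) (hc : c ≠ 0) (s t u : Prop) [Decidable s] [Decidable t]
    [Decidable u] :
    (if (if s then a else 0) + (if t then b else 0) + (if u then c else 0) ≠ 0 then 1 else 0)
        + 2 * (if s ∧ t ∧ a = b then 1 else 0) + 2 * (if s ∧ u ∧ a = c then 1 else 0)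
        + 2 * (if t ∧ u ∧ b = c then 1 else 0)
      ≤ (if s then 1 else 0) + (if t then 1 else 0) + (if u then 1 else 0)
        + 4 * (if s ∧ t ∧ u ∧ a = b ∧ b = c then 1 else 0 : ℕ) := by
  by_cases s <;> by_cases t <;> by_cases u <;>
    by_cases a = b <;> by_cases a = c <;> by_cases b = c <;>
    simp_all [CharTwo.add_eq_zero, add_assoc, CharTwo.add_self_eq_zero]
  all_goals split <;> simp

lemma geom_sum_eq_zero_of_pow_eq_one {K : Type*} [DivisionRing K] {x : K} {k : ℕ} (hx : x ≠ 1)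
    (hxk : x ^ k = 1) : ∑ i ∈ range k, x ^ i = 0 := by
  rw [geom_sum_eq hx, hxk, sub_self, zero_div]

section Counting

variable {n : ℕ}

lemma card_filter_dvd_val {d : ℕ} (hd : d ∣ n) : #{j : Fin n | d ∣ (j : ℕ)} = n / d := by
  obtain ⟨u, rfl⟩ := hd
  rcases Nat.eq_zero_or_pos d with rfl | hd0
  · simp only [zero_mul, Nat.div_zero]
    exact card_eq_zero.2 (filter_eq_empty_iff.2 fun x => absurd x.isLt (by simp))
  rw [Nat.mul_div_cancel_left _ hd0]
  calc #{j : Fin (d * u) | d ∣ (j : ℕ)} = #(range u) := by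
        refine card_bij (fun j _ => j.val / d) (fun j _ => ?_) (fun j₁ hj₁ j₂ hj₂ h => ?_)
          fun t ht => ?_
        · simp only [mem_range]
          exact Nat.div_lt_of_lt_mul (by simp)
        · simp only [mem_filter, mem_univ, true_and] at hj₁ hj₂
          exact Fin.ext (by rw [← Nat.div_mul_cancel hj₁, ← Nat.div_mul_cancel hj₂, h])
        · exact ⟨⟨t * d, by nlinarith [mem_range.1 ht]⟩, by simp, by simp [hd0]⟩
    _ = u := card_range u

lemma card_filter_dvd_mul [NeZero n] {u : ℕ} (hu : u ∣ n) : #{j : Fin n | n ∣ j * u} = u := by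
  simp_rw [mul_comm _ u, ← Nat.div_dvd_iff_dvd_mul hu (Nat.pos_of_dvd_of_pos hu (NeZero.pos n))]
  rw [card_filter_dvd_val (Nat.div_dvd_of_dvd hu), Nat.div_div_self hu (NeZero.ne n)]

lemma dvd_mul_gcd_iff {j a b : ℕ} : n ∣ j * Nat.gcd a b ↔ n ∣ j * a ∧ n ∣ j * b := by
  rw [← Nat.gcd_mul_left, Nat.dvd_gcd_iff]

end Counting

lemma hwt_eq_card_filter {n : ℕ} {M : Type*} [Zero M] (c : Fin n → M) :
    hwt c = #{j | c j ≠ 0} := by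
  rw [hwt, Nat.card_eq_fintype_card, Fintype.card_subtype]

section CyclicCode

variable {n : ℕ} {F : Type*} [Field F] {C : Submodule F (Fin n → F)}

lemma minDist_le_hwt {c : Fin n → F} (hc : c ∈ C) (hc0 : c ≠ 0) : minDist C ≤ hwt c :=
  Nat.sInf_le ⟨c, hc, hc0, rfl⟩

variable [NeZero n]

lemma IsCyclicCode.shift_mem (hC : IsCyclicCode C) {c : Fin n → F} (hc : c ∈ C) (i : Fin n) :
    (fun j => c (j - i)) ∈ C := by
  obtain ⟨m, rfl⟩ := Nat.exists_eq_succ_of_ne_zero (NeZero.ne n)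
  induction i using Fin.induction with
  | zero => simpa using hc
  | succ i ih =>
    convert hC _ ih using 2 with j
    rw [← Fin.coeSucc_eq_succ, sub_sub, add_comm]

lemma pow_val_sub_mul_pow_val {M : Type*} [Monoid M] {x : M} (hx : x ^ n = 1) (i j : Fin n) :
    x ^ ((i - j : Fin n) : ℕ) * x ^ (j : ℕ) = x ^ (i : ℕ) := by
  rw [← pow_add, pow_eq_pow_mod _ hx, ← Fin.val_add, sub_add_cancel]

lemma IsCyclicCode.inv_pow_mem_s17 (hC : IsCyclicCode C) {β : F} (hβ : β ^ n = 1)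
    (hZ : β ∉ definingSet C) : (fun j : Fin n => β⁻¹ ^ (j : ℕ)) ∈ C := by
  obtain ⟨d, hd, hS⟩ : ∃ d ∈ C, ∑ k : Fin n, d k * β ^ (k : ℕ) ≠ 0 := by
    simpa [definingSet, hβ] using hZ
  have hβ0 : β ≠ 0 := by rintro rfl; simp [NeZero.ne n] at hβ
  have hβ' : β⁻¹ ^ n = 1 := by rw [inv_pow, hβ, inv_one]
  have hshifts : ∑ i : Fin n, β⁻¹ ^ (i : ℕ) • (fun j => d (j - i))
      = (∑ k : Fin n, d k * β ^ (k : ℕ)) • fun j : Fin n => β⁻¹ ^ (j : ℕ) := by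
    ext j
    simp only [Finset.sum_apply, Pi.smul_apply, smul_eq_mul, Finset.sum_mul]
    rw [← (Equiv.subLeft j).sum_comp]
    refine Finset.sum_congr rfl fun i _ => ?_
    rw [Equiv.subLeft_apply, sub_sub_cancel, ← pow_val_sub_mul_pow_val hβ' j i, mul_left_comm,
      mul_assoc, ← mul_pow, mul_inv_cancel₀ hβ0, one_pow, mul_one, mul_comm]
  have h := C.smul_mem (∑ k : Fin n, d k * β ^ (k : ℕ))⁻¹
    (hshifts ▸ C.sum_mem fun i _ => C.smul_mem _ (hC.shift_mem hd i))
  rwa [smul_smul, inv_mul_cancel₀ hS, one_smul] at h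

end CyclicCode

section Coset

variable {F : Type*} [Field F] {n : ℕ} {α : F}

lemma pow_eq_one_of_mem_coset (hα : α ^ n = 1) {l : ℤ} {p : ℕ} {γ : F}
    (hγ : γ ∈ coset α n l p) : γ ^ n = 1 := by
  obtain ⟨t, -, rfl⟩ := hγ
  rw [← zpow_natCast, ← zpow_mul, mul_comm, zpow_mul, zpow_natCast, hα, one_zpow]

lemma injOn_mul_pow_of_dvd [NeZero n] (hα : IsPrimitiveRoot α n) (l : ℤ) {p : ℕ}
    (hp : p ∣ n) :
    Set.InjOn (fun t : ℕ => α ^ l * (α ^ p) ^ t) (range (n / p)) := by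
  have hp0 : p ≠ 0 := by rintro rfl; exact NeZero.ne n (zero_dvd_iff.1 hp)
  intro s hs t ht h
  exact (hα.pow_of_dvd hp0 hp).injOn_pow hs ht
    (mul_left_cancel₀ (zpow_ne_zero _ (hα.ne_zero (NeZero.ne n))) h)

lemma inv_zpow_pow_eq_iff [NeZero n] (hα : IsPrimitiveRoot α n) (a b : ℤ) (j : ℕ) :
    (α ^ a)⁻¹ ^ j = (α ^ b)⁻¹ ^ j ↔ n ∣ j * (a - b).natAbs := by
  have hα0 := hα.ne_zero (NeZero.ne n)
  rw [inv_pow, inv_pow, inv_inj, ← zpow_natCast, ← zpow_natCast, ← zpow_mul, ← zpow_mul,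
    ← div_eq_one_iff_eq (zpow_ne_zero _ hα0), ← zpow_sub₀ hα0, ← sub_mul,
    hα.zpow_eq_one_iff_dvd, Int.natCast_dvd, Int.natAbs_mul, Int.natAbs_natCast, mul_comm]

variable [Fintype F]

lemma filter_mem_coset_eq_image (hα : α ≠ 0) (l : ℤ) (p : ℕ) :
    filter (· ∈ coset α n l p) univ =
      (range (n / p)).image fun t => α ^ l * (α ^ p) ^ t := by
  ext γ
  simp only [mem_filter_univ, mem_image, mem_range]
  change (∃ t, t < n / p ∧ γ = α ^ (l + (t : ℤ) * p)) ↔ _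
  refine exists_congr fun t => and_congr_right fun _ => ?_
  rw [eq_comm, zpow_add₀ hα, mul_comm (t : ℤ), zpow_mul, zpow_natCast, zpow_natCast]

/-- Evaluated at an `n`-th root of unity `β`, this word gives `n • [β ∈ α^l G_p]`: its nonzeros
are exactly the coset. -/
noncomputable def cosetWord (α : F) (n : ℕ) (l : ℤ) (p : ℕ) : Fin n → F :=
  fun j => ∑ γ with γ ∈ coset α n l p, γ⁻¹ ^ (j : ℕ)

lemma sum_cosetWord_mem [CharP F 2] [NeZero n] (hα : α ^ n = 1)
    {C : Submodule F (Fin n → F)} (hC : IsCyclicCode C) {ι : Type*} (s : Finset ι) (l : ι → ℤ)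
    (p : ι → ℕ)
    (hZ : ∀ γ : F, γ ^ n = 1 → Odd #{k ∈ s | γ ∈ coset α n (l k) (p k)} →
      γ ∉ definingSet C) :
    ∑ k ∈ s, cosetWord α n (l k) (p k) ∈ C := by
  have hsum : ∑ k ∈ s, cosetWord α n (l k) (p k)
      = ∑ γ : F, (#{k ∈ s | γ ∈ coset α n (l k) (p k)} : F) •
          fun j : Fin n => γ⁻¹ ^ (j : ℕ) := by
    ext j
    simp only [cosetWord, Finset.sum_apply, Pi.smul_apply, smul_eq_mul, sum_filter]
    rw [sum_comm]
    refine sum_congr rfl fun γ _ => ?_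
    rw [← sum_filter, sum_const, nsmul_eq_mul]
  rw [hsum]
  refine sum_natCast_smul_mem_of_odd _ _ _ fun γ _ hodd => ?_
  obtain ⟨k, hk⟩ := card_pos.1 hodd.pos
  have hγ := pow_eq_one_of_mem_coset hα (mem_filter.1 hk).2
  exact hC.inv_pow_mem_s17 hγ (hZ γ hγ hodd)

lemma cosetWord_apply [CharP F 2] [NeZero n] (hα : IsPrimitiveRoot α n) (l : ℤ) {p : ℕ}
    (hp : p ∣ n) (j : Fin n) :
    cosetWord α n l p j = if n ∣ j * p then (α ^ l)⁻¹ ^ (j : ℕ) else 0 := by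
  set x := ((α ^ p) ^ (j : ℕ))⁻¹
  have hx : x ^ (n / p) = 1 := by
    rw [inv_pow, ← pow_mul, ← pow_mul, inv_eq_one, hα.pow_eq_one_iff_dvd, mul_left_comm,
      Nat.mul_div_cancel' hp]
    exact dvd_mul_left n j
  have hx1 : x = 1 ↔ n ∣ j * p := by
    rw [inv_eq_one, ← pow_mul, hα.pow_eq_one_iff_dvd, mul_comm]
  have hterm : ∀ t : ℕ, (α ^ l * (α ^ p) ^ t)⁻¹ ^ (j : ℕ) = (α ^ l)⁻¹ ^ (j : ℕ) * x ^ t := by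
    intro t
    rw [mul_inv, mul_pow, inv_pow ((α ^ p) ^ t), ← pow_mul, mul_comm t, pow_mul, ← inv_pow]
  rw [cosetWord, filter_mem_coset_eq_image (hα.ne_zero (NeZero.ne n)),
    sum_image (injOn_mul_pow_of_dvd hα l hp), sum_congr rfl fun t _ => hterm t, ← mul_sum]
  split_ifs with h
  · have hodd : Odd (n / p) := hα.odd_of_charP_two.of_dvd_nat (Nat.div_dvd_of_dvd hp)
    simp [hx1.2 h, CharTwo.natCast_eq_ite, Nat.not_even_iff_odd.2 hodd]
  · rw [geom_sum_eq_zero_of_pow_eq_one (mt hx1.1 h) hx, mul_zero]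

lemma hwt_cosetWord_add_add_le [CharP F 2] [NeZero n] (hα : IsPrimitiveRoot α n)
    {p₁ p₂ p₃ : ℕ} (hp₁ : p₁ ∣ n) (hp₂ : p₂ ∣ n) (hp₃ : p₃ ∣ n) (l₁ l₂ l₃ : ℤ) :
    hwt (cosetWord α n l₁ p₁ + cosetWord α n l₂ p₂ + cosetWord α n l₃ p₃)
        + 2 * Nat.gcd (Nat.gcd p₁ p₂) (l₁ - l₂).natAbs
        + 2 * Nat.gcd (Nat.gcd p₁ p₃) (l₁ - l₃).natAbs
        + 2 * Nat.gcd (Nat.gcd p₂ p₃) (l₂ - l₃).natAbs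
      ≤ p₁ + p₂ + p₃
        + 4 * Nat.gcd (Nat.gcd (Nat.gcd (Nat.gcd p₁ p₂) p₃) (l₁ - l₂).natAbs)
            (l₂ - l₃).natAbs := by
  have hne : ∀ (l : ℤ) (j : ℕ), (α ^ l)⁻¹ ^ j ≠ 0 := fun l j =>
    pow_ne_zero _ (inv_ne_zero (zpow_ne_zero _ (hα.ne_zero (NeZero.ne n))))
  have hcount : ∀ g : ℕ, g ∣ n → ∑ j : Fin n, (if n ∣ (j : ℕ) * g then 1 else 0) = g :=
    fun g hg => by rw [sum_boole, Nat.cast_id, card_filter_dvd_mul hg]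
  have hgcd : ∀ {a : ℕ} (b : ℕ), a ∣ n → Nat.gcd a b ∣ n := fun b h =>
    (Nat.gcd_dvd_left _ b).trans h
  have h₁₂ := hcount (Nat.gcd (Nat.gcd p₁ p₂) (l₁ - l₂).natAbs) (hgcd _ (hgcd _ hp₁))
  have h₁₃ := hcount (Nat.gcd (Nat.gcd p₁ p₃) (l₁ - l₃).natAbs) (hgcd _ (hgcd _ hp₁))
  have h₂₃ := hcount (Nat.gcd (Nat.gcd p₂ p₃) (l₂ - l₃).natAbs) (hgcd _ (hgcd _ hp₂))
  have h₁₂₃ := hcount (Nat.gcd (Nat.gcd (Nat.gcd (Nat.gcd p₁ p₂) p₃) (l₁ - l₂).natAbs)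
    (l₂ - l₃).natAbs) (hgcd _ (hgcd _ (hgcd _ (hgcd _ hp₁))))
  simp only [dvd_mul_gcd_iff, and_assoc] at h₁₂ h₁₃ h₂₃ h₁₂₃
  have hsum := sum_le_sum fun (j : Fin n) (_ : j ∈ univ) =>
    ite_add_ite_add_ite_ne_zero_le (hne l₁ j) (hne l₂ j) (hne l₃ j)
      (n ∣ j * p₁) (n ∣ j * p₂) (n ∣ j * p₃)
  simp only [sum_add_distrib, ← mul_sum, inv_zpow_pow_eq_iff hα] at hsum
  rw [hcount _ hp₁, hcount _ hp₂, hcount _ hp₃, h₁₂, h₁₃, h₂₃, h₁₂₃] at hsum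
  rw [hwt_eq_card_filter, card_filter]
  simpa only [Pi.add_apply, cosetWord_apply hα _ hp₁, cosetWord_apply hα _ hp₂,
    cosetWord_apply hα _ hp₃] using hsum

end Coset

theorem stmt17_general {F : Type*} [Field F] [Fintype F] (q n : ℕ) [NeZero n]
    (hq : Fintype.card F = q) (hq2 : ∃ e : ℕ, 0 < e ∧ q = 2 ^ e)
    (α : F) (hα : IsPrimitiveRoot α n)
    (p₁ p₂ p₃ : ℕ)
    (hp₁n : p₁ ∣ n) (hp₂n : p₂ ∣ n) (hp₃n : p₃ ∣ n)
    (l₁ l₂ l₃ : ℤ)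
    (D : Submodule F (Fin n → F)) (hcyc : IsCyclicCode D)
    (hZ : ∀ γ : F, γ ^ n = 1 →
      Odd ((if γ ∈ coset α n l₁ p₁ then 1 else 0) + (if γ ∈ coset α n l₂ p₂ then 1 else 0)
          + (if γ ∈ coset α n l₃ p₃ then 1 else 0) : ℕ) →
      γ ∉ definingSet D) :
    (minDist D : ℤ) ≤ (p₁ : ℤ) + p₂ + p₃
        - 2 * Nat.gcd (Nat.gcd p₁ p₂) (l₁ - l₂).natAbs
        - 2 * Nat.gcd (Nat.gcd p₁ p₃) (l₁ - l₃).natAbs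
        - 2 * Nat.gcd (Nat.gcd p₂ p₃) (l₂ - l₃).natAbs
        + 4 * Nat.gcd (Nat.gcd (Nat.gcd (Nat.gcd p₁ p₂) p₃) (l₁ - l₂).natAbs)
            (l₂ - l₃).natAbs := by
  obtain ⟨e, he, rfl⟩ := hq2
  have : CharP F 2 := charP_two_of_card_eq_two_pow he hq
  have hw := hwt_cosetWord_add_add_le hα hp₁n hp₂n hp₃n l₁ l₂ l₃
  set c := cosetWord α n l₁ p₁ + cosetWord α n l₂ p₂ + cosetWord α n l₃ p₃
  have hcD : c ∈ D := by
    have h := sum_cosetWord_mem hα.pow_eq_one hcyc univ ![l₁, l₂, l₃] ![p₁, p₂, p₃]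
      fun γ hγ hodd => hZ γ hγ (by rwa [card_filter, Fin.sum_univ_three] at hodd)
    simpa [Fin.sum_univ_three] using h
  have hc0 : c ≠ 0 := fun h => by
    simpa [c, cosetWord_apply hα _ hp₁n, cosetWord_apply hα _ hp₂n, cosetWord_apply hα _ hp₃n,
      CharTwo.add_self_eq_zero] using congrFun h 0
  have := minDist_le_hwt hcD hc0
  omega

/-- if the defining set of a nonzero cyclic code contains none of the n-th roots
of unity lying in an odd number of three given cosets, then the minimum distance is bounded by
the inclusion–exclusion expression. -/
theorem stmt17 {F : Type*} [Field F] [Fintype F] (q n : ℕ) [NeZero n]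
    (hq : Fintype.card F = q) (hq2 : ∃ e : ℕ, 0 < e ∧ q = 2 ^ e) (hn : n ∣ q - 1)
    (α : F) (hα : IsPrimitiveRoot α n)
    (p₁ p₂ p₃ : ℕ) (hp₁ : 0 < p₁) (hp₂ : 0 < p₂) (hp₃ : 0 < p₃)
    (hp₁n : p₁ ∣ n) (hp₂n : p₂ ∣ n) (hp₃n : p₃ ∣ n)
    (l₁ l₂ l₃ : ℤ)
    (D : Submodule F (Fin n → F)) (hcyc : IsCyclicCode D) (hD : D ≠ ⊥)
    (hZ : ∀ γ : F, γ ^ n = 1 →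
      Odd ((if γ ∈ coset α n l₁ p₁ then 1 else 0) + (if γ ∈ coset α n l₂ p₂ then 1 else 0)
          + (if γ ∈ coset α n l₃ p₃ then 1 else 0) : ℕ) →
      γ ∉ definingSet D) :
    (minDist D : ℤ) ≤ (p₁ : ℤ) + p₂ + p₃
        - 2 * Nat.gcd (Nat.gcd p₁ p₂) (l₁ - l₂).natAbs
        - 2 * Nat.gcd (Nat.gcd p₁ p₃) (l₁ - l₃).natAbs
        - 2 * Nat.gcd (Nat.gcd p₂ p₃) (l₂ - l₃).natAbs
        + 4 * Nat.gcd (Nat.gcd (Nat.gcd (Nat.gcd p₁ p₂) p₃) (l₁ - l₂).natAbs)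
            (l₂ - l₃).natAbs :=
  stmt17_general q n hq hq2 α hα p₁ p₂ p₃ hp₁n hp₂n hp₃n l₁ l₂ l₃ D hcyc hZ

end LRC
end
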